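/- Let $T : \mathcal{B}(X) \to \mathcal{B}(X)$ be a contraction with modulus $\alpha \in (0,1)$ and let $w_\ell : X \to [0,\infty)$ satisfy $\sum_{\ell=1}^\infty w_\ell(x) = 1$ for all $x$. Then the operator $T^{(w)}$ defined by $(T^{(w)} J)(x) = \sum_{\ell=1}^\infty w_\ell(x)(T^\ell J)(x)$ is a contraction on $\mathcal{B}(X)$ with modulus $\bar\alpha = \sup_{x \in X} \sum_{\ell=1}^\infty w_\ell(x) \alpha^\ell$, and $\bar\alpha \le \alpha < 1$. -/

import Mathlib

/-!
The iterates of a contraction contract at rate `α ^ ℓ`, so pointwise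
`|T^ℓ J x - T^ℓ J' x| ≤ α ^ ℓ ‖J - J'‖ v x`; averaging these bounds with the weights `w_ℓ(x)` gives
the modulus `∑_ℓ w_ℓ(x) α ^ ℓ ≤ ᾱ`. The series defining `T^{(w)} J` converge because orbits of a
contraction stay bounded in the weighted norm (the steps `T^{k+1} J - T^k J` decay geometrically).
Finally `ᾱ ≤ α` because `α ^ ℓ ≤ α` for `ℓ ≥ 1` and the weights sum to one.
In Lean the weights are indexed from `0`: `w ℓ` is the paper's `w_{ℓ+1}`.
-/

open Filter Topology

noncomputable def wnorm {X : Type*} (v : X → ℝ) (J : X → ℝ) : ℝ := ⨆ x, |J x| / v x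

def memB {X : Type*} (v : X → ℝ) (J : X → ℝ) : Prop := ∃ C : ℝ, ∀ x, |J x| / v x ≤ C

section WeightedSupNorm

variable {X : Type*} {v : X → ℝ}

lemma wnorm_nonneg (hv : ∀ x, 0 ≤ v x) (J : X → ℝ) : 0 ≤ wnorm v J :=
  Real.iSup_nonneg fun x => div_nonneg (abs_nonneg _) (hv x)

lemma abs_le_wnorm_mul (hv : ∀ x, 0 < v x) {J : X → ℝ} (hJ : memB v J) (x : X) :
    |J x| ≤ wnorm v J * v x := by
  obtain ⟨C, hC⟩ := hJ
  rw [← div_le_iff₀ (hv x)]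
  exact le_ciSup ⟨C, Set.forall_mem_range.2 hC⟩ x

lemma wnorm_le (hv : ∀ x, 0 < v x) {J : X → ℝ} {M : ℝ} (hM : 0 ≤ M)
    (h : ∀ x, |J x| ≤ M * v x) : wnorm v J ≤ M :=
  Real.iSup_le (fun x => (div_le_iff₀ (hv x)).2 (h x)) hM

lemma memB_of_abs_le (hv : ∀ x, 0 < v x) {J : X → ℝ} {M : ℝ} (h : ∀ x, |J x| ≤ M * v x) :
    memB v J :=
  ⟨M, fun x => (div_le_iff₀ (hv x)).2 (h x)⟩

lemma memB_sub (hv : ∀ x, 0 < v x) {J J' : X → ℝ} (hJ : memB v J) (hJ' : memB v J') :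
    memB v (fun x => J x - J' x) :=
  memB_of_abs_le hv fun x => (abs_sub _ _).trans <| by
    rw [add_mul]
    exact add_le_add (abs_le_wnorm_mul hv hJ x) (abs_le_wnorm_mul hv hJ' x)

end WeightedSupNorm

section Contraction

variable {X : Type*} {v : X → ℝ} {T : (X → ℝ) → (X → ℝ)} {α : ℝ}

lemma memB_iterate (hT : ∀ J, memB v J → memB v (T J)) (n : ℕ) {J : X → ℝ} (hJ : memB v J) :
    memB v (T^[n] J) := by
  induction n with
  | zero => exact hJ
  | succ n ih => rw [Function.iterate_succ_apply']; exact hT _ ih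

lemma wnorm_iterate_sub_le (hα : 0 ≤ α) (hT : ∀ J, memB v J → memB v (T J))
    (hcontr : ∀ J J', memB v J → memB v J' →
      wnorm v (fun x => T J x - T J' x) ≤ α * wnorm v (fun x => J x - J' x))
    (n : ℕ) {J J' : X → ℝ} (hJ : memB v J) (hJ' : memB v J') :
    wnorm v (fun x => T^[n] J x - T^[n] J' x) ≤ α ^ n * wnorm v (fun x => J x - J' x) := by
  induction n with
  | zero => simp
  | succ n ih =>
    simp only [Function.iterate_succ_apply']
    calc _ ≤ α * wnorm v (fun x => T^[n] J x - T^[n] J' x) :=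
          hcontr _ _ (memB_iterate hT n hJ) (memB_iterate hT n hJ')
      _ ≤ α * (α ^ n * wnorm v (fun x => J x - J' x)) := by gcongr
      _ = α ^ (n + 1) * wnorm v (fun x => J x - J' x) := by ring

lemma abs_iterate_sub_le (hv : ∀ x, 0 < v x) (hα : 0 ≤ α)
    (hT : ∀ J, memB v J → memB v (T J))
    (hcontr : ∀ J J', memB v J → memB v J' →
      wnorm v (fun x => T J x - T J' x) ≤ α * wnorm v (fun x => J x - J' x))
    (n : ℕ) {J J' : X → ℝ} (hJ : memB v J) (hJ' : memB v J') (x : X) :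
    |T^[n] J x - T^[n] J' x| ≤ α ^ n * wnorm v (fun x => J x - J' x) * v x :=
  (abs_le_wnorm_mul hv (memB_sub hv (memB_iterate hT n hJ) (memB_iterate hT n hJ')) x).trans <|
    mul_le_mul_of_nonneg_right (wnorm_iterate_sub_le hα hT hcontr n hJ hJ') (hv x).le

lemma abs_iterate_sub_self_le (hv : ∀ x, 0 < v x) (hα0 : 0 ≤ α) (hα1 : α < 1)
    (hT : ∀ J, memB v J → memB v (T J))
    (hcontr : ∀ J J', memB v J → memB v J' →
      wnorm v (fun x => T J x - T J' x) ≤ α * wnorm v (fun x => J x - J' x))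
    (n : ℕ) {J : X → ℝ} (hJ : memB v J) (x : X) :
    |T^[n] J x - J x| ≤ wnorm v (fun x => T J x - J x) / (1 - α) * v x := by
  set D := wnorm v (fun x => T J x - J x)
  have hD : 0 ≤ D * v x := mul_nonneg (wnorm_nonneg (fun x => (hv x).le) _) (hv x).le
  have hstep (k : ℕ) : |T^[k + 1] J x - T^[k] J x| ≤ α ^ k * (D * v x) := by
    rw [Function.iterate_succ_apply, ← mul_assoc]
    exact abs_iterate_sub_le hv hα0 hT hcontr k (hT J hJ) hJ x
  have hgeom : ∑ k ∈ Finset.range n, α ^ k ≤ 1 / (1 - α) := by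
    rw [Finset.range_eq_Ico]
    simpa using geom_sum_Ico_le_of_lt_one (m := 0) (n := n) hα0 hα1
  calc |T^[n] J x - J x| = |∑ k ∈ Finset.range n, (T^[k + 1] J x - T^[k] J x)| := by
        rw [Finset.sum_range_sub (fun k => T^[k] J x)]; rfl
    _ ≤ ∑ k ∈ Finset.range n, α ^ k * (D * v x) :=
        (Finset.abs_sum_le_sum_abs _ _).trans (Finset.sum_le_sum fun k _ => hstep k)
    _ = (∑ k ∈ Finset.range n, α ^ k) * (D * v x) := (Finset.sum_mul _ _ _).symm
    _ ≤ 1 / (1 - α) * (D * v x) := mul_le_mul_of_nonneg_right hgeom hD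
    _ = D / (1 - α) * v x := by ring

end Contraction

section WeightedSeries

variable {ι : Type*} {w : ι → ℝ}

lemma summable_mul_of_abs_le (hw : Summable w) (hw0 : ∀ i, 0 ≤ w i) {a : ι → ℝ} {M : ℝ}
    (ha : ∀ i, |a i| ≤ M) : Summable fun i => w i * a i :=
  Summable.of_norm_bounded (hw.mul_right M) fun i => by
    rw [Real.norm_eq_abs, abs_mul, abs_of_nonneg (hw0 i)]
    exact mul_le_mul_of_nonneg_left (ha i) (hw0 i)

lemma abs_tsum_mul_sub_tsum_mul_le (hw0 : ∀ i, 0 ≤ w i) {a b c : ι → ℝ}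
    (ha : Summable fun i => w i * a i) (hb : Summable fun i => w i * b i)
    (hc : Summable fun i => w i * c i) (h : ∀ i, |a i - b i| ≤ c i) :
    |∑' i, w i * a i - ∑' i, w i * b i| ≤ ∑' i, w i * c i := by
  rw [← ha.tsum_sub hb, ← Real.norm_eq_abs]
  refine tsum_of_norm_bounded hc.hasSum fun i => ?_
  rw [Real.norm_eq_abs, ← mul_sub, abs_mul, abs_of_nonneg (hw0 i)]
  exact mul_le_mul_of_nonneg_left (h i) (hw0 i)

end WeightedSeries

section Multistep

variable {w : ℕ → ℝ} {α : ℝ}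

lemma summable_mul_pow (hw : Summable w) (hw0 : ∀ ℓ, 0 ≤ w ℓ) (hα0 : 0 ≤ α) (hα1 : α ≤ 1)
    (m : ℕ) : Summable fun ℓ => w ℓ * α ^ (ℓ + m) :=
  summable_mul_of_abs_le hw hw0 fun ℓ => by
    rw [abs_pow, abs_of_nonneg hα0]
    exact pow_le_one₀ hα0 hα1

lemma tsum_mul_pow_succ_le (hw : HasSum w 1) (hw0 : ∀ ℓ, 0 ≤ w ℓ) (hα0 : 0 ≤ α) (hα1 : α ≤ 1) :
    ∑' ℓ, w ℓ * α ^ (ℓ + 1) ≤ α :=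
  calc ∑' ℓ, w ℓ * α ^ (ℓ + 1) ≤ ∑' ℓ, w ℓ * α :=
        (summable_mul_pow hw.summable hw0 hα0 hα1 1).tsum_le_tsum
          (fun ℓ => mul_le_mul_of_nonneg_left (pow_le_of_le_one hα0 hα1 ℓ.succ_ne_zero) (hw0 ℓ))
          (hw.summable.mul_right α)
    _ = α := by rw [tsum_mul_right, hw.tsum_eq, one_mul]

lemma abs_tsum_mul_iterate_sub_le {X : Type*} {v : X → ℝ} {T : (X → ℝ) → (X → ℝ)}
    (hv : ∀ x, 0 < v x) (hα0 : 0 ≤ α) (hα1 : α < 1) (hT : ∀ J, memB v J → memB v (T J))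
    (hcontr : ∀ J J', memB v J → memB v J' →
      wnorm v (fun x => T J x - T J' x) ≤ α * wnorm v (fun x => J x - J' x))
    (hw : Summable w) (hw0 : ∀ ℓ, 0 ≤ w ℓ) {J J' : X → ℝ} (hJ : memB v J) (hJ' : memB v J')
    (x : X) :
    |∑' ℓ, w ℓ * T^[ℓ + 1] J x - ∑' ℓ, w ℓ * T^[ℓ + 1] J' x| ≤
      (∑' ℓ, w ℓ * α ^ (ℓ + 1)) * (wnorm v (fun x => J x - J' x) * v x) := by
  have hsummable {f : X → ℝ} (hf : memB v f) : Summable fun ℓ => w ℓ * T^[ℓ + 1] f x :=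
    summable_mul_of_abs_le hw hw0 (M := wnorm v (fun x => T f x - f x) / (1 - α) * v x + |f x|)
      fun ℓ => sub_le_iff_le_add.1 (abs_sub_abs_le_abs_sub _ (f x)) |>.trans <|
        add_le_add_left (abs_iterate_sub_self_le hv hα0 hα1 hT hcontr (ℓ + 1) hf x) _
  calc _ ≤ ∑' ℓ, w ℓ * (α ^ (ℓ + 1) * (wnorm v (fun x => J x - J' x) * v x)) := by
        refine abs_tsum_mul_sub_tsum_mul_le hw0 (hsummable hJ) (hsummable hJ') ?_ fun ℓ => ?_
        · simpa only [mul_assoc] using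
            (summable_mul_pow hw hw0 hα0 hα1.le 1).mul_right (wnorm v (fun x => J x - J' x) * v x)
        · rw [← mul_assoc]
          exact abs_iterate_sub_le hv hα0 hT hcontr (ℓ + 1) hJ hJ' x
    _ = (∑' ℓ, w ℓ * α ^ (ℓ + 1)) * (wnorm v (fun x => J x - J' x) * v x) := by
        rw [← tsum_mul_right]
        simp only [mul_assoc]

end Multistep

theorem stmt5_general {X : Type*} (v : X → ℝ) (hv : ∀ x, 0 < v x)
    (T : (X → ℝ) → (X → ℝ)) (α : ℝ) (hα : α ∈ Set.Ioo (0 : ℝ) 1)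
    (hT : ∀ J, memB v J → memB v (T J))
    (hcontr : ∀ J J', memB v J → memB v J' →
      wnorm v (fun x => T J x - T J' x) ≤ α * wnorm v (fun x => J x - J' x))
    (w : ℕ → X → ℝ) (hw0 : ∀ ℓ x, 0 ≤ w ℓ x)
    (hw1 : ∀ x, HasSum (fun ℓ : ℕ => w ℓ x) 1) :
    (⨆ x, ∑' ℓ : ℕ, w ℓ x * α ^ (ℓ + 1)) ≤ α ∧
    ∀ J J', memB v J → memB v J' →
      wnorm v (fun x => (∑' ℓ : ℕ, w ℓ x * (T^[ℓ + 1] J) x) -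
          ∑' ℓ : ℕ, w ℓ x * (T^[ℓ + 1] J') x) ≤
        (⨆ y, ∑' ℓ : ℕ, w ℓ y * α ^ (ℓ + 1)) *
          wnorm v (fun x => J x - J' x) := by
  obtain ⟨hα0, hα1⟩ := hα
  have hS (x : X) : ∑' ℓ, w ℓ x * α ^ (ℓ + 1) ≤ α :=
    tsum_mul_pow_succ_le (hw1 x) (hw0 · x) hα0.le hα1.le
  have hᾱ0 : 0 ≤ ⨆ y, ∑' ℓ : ℕ, w ℓ y * α ^ (ℓ + 1) :=
    Real.iSup_nonneg fun y => tsum_nonneg fun ℓ => mul_nonneg (hw0 ℓ y) (by positivity)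
  refine ⟨Real.iSup_le hS hα0.le, fun J J' hJ hJ' => ?_⟩
  set K := wnorm v (fun x => J x - J' x)
  have hK : 0 ≤ K := wnorm_nonneg (fun x => (hv x).le) _
  refine wnorm_le hv (mul_nonneg hᾱ0 hK) fun x => ?_
  calc _ ≤ (∑' ℓ, w ℓ x * α ^ (ℓ + 1)) * (K * v x) :=
        abs_tsum_mul_iterate_sub_le hv hα0.le hα1 hT hcontr (hw1 x).summable (hw0 · x) hJ hJ' x
    _ ≤ (⨆ y, ∑' ℓ : ℕ, w ℓ y * α ^ (ℓ + 1)) * (K * v x) :=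
        mul_le_mul_of_nonneg_right (le_ciSup ⟨α, Set.forall_mem_range.2 hS⟩ x)
          (mul_nonneg hK (hv x).le)
    _ = (⨆ y, ∑' ℓ : ℕ, w ℓ y * α ^ (ℓ + 1)) * K * v x := (mul_assoc _ _ _).symm

/-- the multistep operator `T^{(w)}` is a contraction on `𝓑(X)`
with modulus `ᾱ = ⨆ x, ∑_ℓ w_ℓ(x) α^ℓ`, and `ᾱ ≤ α < 1`.
(Here `w ℓ` stands for `w_{ℓ+1}`.) -/
theorem stmt5 {X : Type*} [Nonempty X] (v : X → ℝ) (hv : ∀ x, 0 < v x)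
    (T : (X → ℝ) → (X → ℝ)) (α : ℝ) (hα : α ∈ Set.Ioo (0 : ℝ) 1)
    (hT : ∀ J, memB v J → memB v (T J))
    (hcontr : ∀ J J', memB v J → memB v J' →
      wnorm v (fun x => T J x - T J' x) ≤ α * wnorm v (fun x => J x - J' x))
    (w : ℕ → X → ℝ) (hw0 : ∀ ℓ x, 0 ≤ w ℓ x)
    (hw1 : ∀ x, HasSum (fun ℓ : ℕ => w ℓ x) 1) :
    (⨆ x, ∑' ℓ : ℕ, w ℓ x * α ^ (ℓ + 1)) ≤ α ∧
    ∀ J J', memB v J → memB v J' →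
      wnorm v (fun x => (∑' ℓ : ℕ, w ℓ x * (T^[ℓ + 1] J) x) -
          ∑' ℓ : ℕ, w ℓ x * (T^[ℓ + 1] J') x) ≤
        (⨆ y, ∑' ℓ : ℕ, w ℓ y * α ^ (ℓ + 1)) *
          wnorm v (fun x => J x - J' x) :=
  stmt5_general v hv T α hα hT hcontr w hw0 hw1
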